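/- arXiv:2003.00146 — 4 statements merged into one kernel-verified Lean document; each statement's English description precedes it below -/
import Mathlib

section
/- Let E₀, R : ℝⁿ → [0,∞) be continuous functions, and assume E₀ is coercive (E₀(x) → ∞ as ‖x‖ → ∞). For each δ > 0 let S_δ denote the set of global minimizers of E₀ + δ·R, let S_{E₀} denote the (nonempty, compact) set of global minimizers of E₀, and let S_{E₀,R} = {x ∈ S_{E₀} : R(x) = inf_{y ∈ S_{E₀}} R(y)}. If (δ_n) is a sequence of positive real numbers with δ_n → 0 and the sets S_{δ_n} converge in Hausdorff distance to a compact set S* (i.e. d_H(S_{δ_n}, S*) → 0), then S* ⊆ S_{E₀,R}. -/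
open Filter Metric

/-- If `δ_n → 0` and the minimizer sets `S_{δ_n}` of `E₀ + δ_n R` converge in Hausdorff
distance to a compact set `S*`, then `S* ⊆ S_{E₀,R}`, the set of minimizers of `E₀`
that minimize `R` among them. -/
theorem stmt_0 {n : ℕ} (E₀ R : EuclideanSpace ℝ (Fin n) → ℝ)
    (hE₀cont : Continuous E₀) (hRcont : Continuous R)
    (hE₀nonneg : ∀ x, 0 ≤ E₀ x) (hRnonneg : ∀ x, 0 ≤ R x)
    (hcoer : Tendsto E₀ (cocompact (EuclideanSpace ℝ (Fin n))) atTop)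
    (SE₀ : Set (EuclideanSpace ℝ (Fin n)))
    (hSE₀ : SE₀ = {x | ∀ y, E₀ x ≤ E₀ y})
    (SER : Set (EuclideanSpace ℝ (Fin n)))
    (hSER : SER = {x ∈ SE₀ | R x = sInf (R '' SE₀)})
    (S : ℝ → Set (EuclideanSpace ℝ (Fin n)))
    (hS : ∀ δ, S δ = {x | ∀ y, E₀ x + δ * R x ≤ E₀ y + δ * R y})
    (δn : ℕ → ℝ) (hδpos : ∀ k, 0 < δn k) (hδ0 : Tendsto δn atTop (nhds 0))
    (Sstar : Set (EuclideanSpace ℝ (Fin n))) (hSstar : IsCompact Sstar)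
    (hconv : Tendsto (fun k => hausdorffDist (S (δn k)) Sstar) atTop (nhds 0)) :
    Sstar ⊆ SER := by
  -- sublevel sets of E₀ are compact
  have hsub : ∀ c : ℝ, IsCompact {x : EuclideanSpace ℝ (Fin n) | E₀ x ≤ c} := by
    intro c
    obtain ⟨K, hKcomp, hKsub⟩ :=
      mem_cocompact.mp (hcoer.eventually (eventually_ge_atTop (c + 1)))
    refine hKcomp.of_isClosed_subset (isClosed_le hE₀cont continuous_const) ?_
    intro x hx
    by_contra hxK
    have := hKsub hxK
    simp only [Set.mem_setOf_eq] at this hx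
    linarith
  -- each S δ (δ ≥ 0) is nonempty and compact
  have hSne : ∀ δ : ℝ, 0 ≤ δ → (S δ).Nonempty := by
    intro δ hδ
    have hcont : Continuous fun x => E₀ x + δ * R x :=
      hE₀cont.add (continuous_const.mul hRcont)
    have hco : Tendsto (fun x => E₀ x + δ * R x)
        (cocompact (EuclideanSpace ℝ (Fin n))) atTop :=
      tendsto_atTop_mono (fun x => by nlinarith [hRnonneg x]) hcoer
    obtain ⟨x, hx⟩ := hcont.exists_forall_le hco
    exact ⟨x, by rw [hS]; exact hx⟩
  have hScomp : ∀ δ : ℝ, 0 ≤ δ → IsCompact (S δ) := by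
    intro δ hδ
    obtain ⟨x₀, hx₀⟩ := hSne δ hδ
    rw [hS] at hx₀
    refine (hsub (E₀ x₀ + δ * R x₀)).of_isClosed_subset ?_ ?_
    · have : S δ = ⋂ y, {x | E₀ x + δ * R x ≤ E₀ y + δ * R y} := by
        rw [hS]; ext x; simp [Set.mem_iInter]
      rw [this]
      exact isClosed_iInter fun y =>
        isClosed_le (hE₀cont.add (continuous_const.mul hRcont)) continuous_const
    · intro x hx
      rw [hS] at hx
      have h1 := hx x₀
      have := hRnonneg x
      simp only [Set.mem_setOf_eq]
      nlinarith
  -- SE₀ is nonempty and compact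
  have hSE₀ne : SE₀.Nonempty := by
    obtain ⟨x, hx⟩ := hE₀cont.exists_forall_le hcoer
    exact ⟨x, by rw [hSE₀]; exact hx⟩
  have hSE₀comp : IsCompact SE₀ := by
    obtain ⟨x₀, hx₀⟩ := hSE₀ne
    rw [hSE₀] at hx₀
    refine (hsub (E₀ x₀)).of_isClosed_subset ?_ ?_
    · have : SE₀ = ⋂ y, {x | E₀ x ≤ E₀ y} := by
        rw [hSE₀]; ext x; simp [Set.mem_iInter]
      rw [this]
      exact isClosed_iInter fun y => isClosed_le hE₀cont continuous_const
    · intro x hx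
      rw [hSE₀] at hx
      exact hx x₀
  -- minimizer of R on SE₀
  obtain ⟨z, hzSE, hzmin⟩ := hSE₀comp.exists_isMinOn hSE₀ne hRcont.continuousOn
  have hbdd : BddBelow (R '' SE₀) := by
    refine ⟨0, ?_⟩
    rintro r ⟨w, _, rfl⟩
    exact hRnonneg w
  have hmz : sInf (R '' SE₀) = R z := by
    refine le_antisymm (csInf_le hbdd ⟨z, hzSE, rfl⟩) ?_
    refine le_csInf ⟨R z, z, hzSE, rfl⟩ ?_
    rintro r ⟨w, hw, rfl⟩
    exact hzmin hw
  -- main argument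
  intro xs hxs
  -- distance from xs to S (δn k) tends to 0
  have hfin : ∀ k, EMetric.hausdorffEdist (S (δn k)) Sstar ≠ ⊤ := fun k =>
    hausdorffEdist_ne_top_of_nonempty_of_bounded (hSne _ (hδpos k).le) ⟨xs, hxs⟩
      ((hScomp _ (hδpos k).le).isBounded) hSstar.isBounded
  have hle : ∀ k, infDist xs (S (δn k)) ≤ hausdorffDist (S (δn k)) Sstar := by
    intro k
    rw [hausdorffDist_comm]
    exact infDist_le_hausdorffDist_of_mem hxs (by rw [EMetric.hausdorffEdist_comm]; exact hfin k)
  have hinf0 : Tendsto (fun k => infDist xs (S (δn k))) atTop (nhds 0) :=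
    squeeze_zero (fun k => infDist_nonneg) hle hconv
  -- choose nearest points
  choose x hxS hxd using fun k =>
    (hScomp _ (hδpos k).le).exists_infDist_eq_dist (hSne _ (hδpos k).le) xs
  have hxlim : Tendsto x atTop (nhds xs) := by
    rw [tendsto_iff_dist_tendsto_zero]
    have : (fun k => dist (x k) xs) = fun k => infDist xs (S (δn k)) := by
      funext k; rw [dist_comm, ← hxd k]
    rw [this]
    exact hinf0
  have hxk : ∀ k y, E₀ (x k) + δn k * R (x k) ≤ E₀ y + δn k * R y := by
    intro k
    have := hxS k
    rw [hS] at this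
    exact this
  -- xs minimizes E₀
  have hxsSE : xs ∈ SE₀ := by
    rw [hSE₀]
    intro y
    have h1 : Tendsto (fun k => E₀ (x k)) atTop (nhds (E₀ xs)) :=
      (hE₀cont.tendsto xs).comp hxlim
    have h2 : Tendsto (fun k => E₀ y + δn k * R y) atTop (nhds (E₀ y)) := by
      have h0 : Tendsto (fun k => δn k * R y) atTop (nhds 0) := by
        simpa using hδ0.mul_const (R y)
      simpa using
        (tendsto_const_nhds : Tendsto (fun _ : ℕ => E₀ y) atTop (nhds (E₀ y))).add h0
    refine le_of_tendsto_of_tendsto' h1 h2 fun k => ?_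
    have := hxk k y
    have := mul_nonneg (hδpos k).le (hRnonneg (x k))
    linarith
  -- R xs ≤ R z
  have hRle : R xs ≤ R z := by
    have h1 : Tendsto (fun k => R (x k)) atTop (nhds (R xs)) :=
      (hRcont.tendsto xs).comp hxlim
    refine le_of_tendsto' h1 fun k => ?_
    have h2 := hxk k z
    have h3 : E₀ z ≤ E₀ (x k) := by
      rw [hSE₀] at hzSE
      exact hzSE (x k)
    have h4 : δn k * R (x k) ≤ δn k * R z := by linarith
    exact le_of_mul_le_mul_left h4 (hδpos k)
  rw [hSER]
  refine ⟨hxsSE, le_antisymm ?_ (csInf_le hbdd ⟨xs, hxsSE, rfl⟩)⟩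
  rw [hmz]
  exact hRle
end

section
/- Let E₀, R : ℝⁿ → [0,∞) be continuous functions, and assume E₀ is coercive. For each δ > 0 let S_δ denote the set of global minimizers of E₀ + δ·R, let S_{E₀} denote the set of global minimizers of E₀, and let S_{E₀,R} = {x ∈ S_{E₀} : R(x) = inf_{y ∈ S_{E₀}} R(y)}. If (δ_n) is a sequence of positive real numbers with δ_n → 0, then there exists a subsequence (δ_{n_k}) and a nonempty compact set S* ⊆ S_{E₀,R} such that S_{δ_{n_k}} converges to S* in Hausdorff distance. -/
open Filter Metric

/-- If `δ_n → 0`, then some subsequence of the minimizer sets `S_{δ_n}` of `E₀ + δ_n R`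
converges in Hausdorff distance to a nonempty compact subset of `S_{E₀,R}`. -/
theorem stmt_1 {n : ℕ} (E₀ R : EuclideanSpace ℝ (Fin n) → ℝ)
    (hE₀cont : Continuous E₀) (hRcont : Continuous R)
    (hE₀nonneg : ∀ x, 0 ≤ E₀ x) (hRnonneg : ∀ x, 0 ≤ R x)
    (hcoer : Tendsto E₀ (cocompact (EuclideanSpace ℝ (Fin n))) atTop)
    (SE₀ : Set (EuclideanSpace ℝ (Fin n)))
    (hSE₀ : SE₀ = {x | ∀ y, E₀ x ≤ E₀ y})
    (SER : Set (EuclideanSpace ℝ (Fin n)))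
    (hSER : SER = {x ∈ SE₀ | R x = sInf (R '' SE₀)})
    (S : ℝ → Set (EuclideanSpace ℝ (Fin n)))
    (hS : ∀ δ, S δ = {x | ∀ y, E₀ x + δ * R x ≤ E₀ y + δ * R y})
    (δn : ℕ → ℝ) (hδpos : ∀ k, 0 < δn k) (hδ0 : Tendsto δn atTop (nhds 0)) :
    ∃ (φ : ℕ → ℕ), StrictMono φ ∧
      ∃ Sstar : Set (EuclideanSpace ℝ (Fin n)), Sstar.Nonempty ∧ IsCompact Sstar ∧
        Sstar ⊆ SER ∧
        Tendsto (fun k => hausdorffDist (S (δn (φ k))) Sstar) atTop (nhds 0) := by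
  classical
  -- a global minimizer of E₀
  obtain ⟨x₀, hx₀⟩ := hE₀cont.exists_forall_le hcoer
  have hx₀SE : x₀ ∈ SE₀ := by rw [hSE₀]; exact hx₀
  -- bound on δn
  obtain ⟨C, hC⟩ := hδ0.bddAbove_range
  have hδleC : ∀ k, δn k ≤ max C 1 :=
    fun k => le_trans (hC ⟨k, rfl⟩) (le_max_left _ _)
  set M : ℝ := E₀ x₀ + max C 1 * R x₀ with hMdef
  -- the sublevel set K is compact
  set K : Set (EuclideanSpace ℝ (Fin n)) := {x | E₀ x ≤ M} with hKdef
  have hKclosed : IsClosed K := isClosed_le hE₀cont continuous_const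
  obtain ⟨t, htc, htsub⟩ : ∃ t : Set (EuclideanSpace ℝ (Fin n)), IsCompact t ∧ tᶜ ⊆ {x | M + 1 ≤ E₀ x} :=
    mem_cocompact.mp (hcoer.eventually (eventually_ge_atTop (M + 1)))
  have hK : IsCompact K := by
    refine htc.of_isClosed_subset hKclosed (fun x hx => ?_)
    by_contra hxt
    have := htsub hxt
    have : M + 1 ≤ E₀ x := this
    have hxK : E₀ x ≤ M := hx
    linarith
  -- each S (δn k) is contained in K
  have hSsub : ∀ k, S (δn k) ⊆ K := by
    intro k x hx
    rw [hS] at hx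
    have h1 := hx x₀
    have h2 : 0 ≤ δn k * R x := mul_nonneg (hδpos k).le (hRnonneg x)
    have h3 : δn k * R x₀ ≤ max C 1 * R x₀ :=
      mul_le_mul_of_nonneg_right (hδleC k) (hRnonneg x₀)
    show E₀ x ≤ M
    simp only [hMdef]
    linarith
  -- each S (δn k) is nonempty
  have hSne : ∀ k, (S (δn k)).Nonempty := by
    intro k
    have hco : Tendsto (fun x => E₀ x + δn k * R x) (cocompact (EuclideanSpace ℝ (Fin n))) atTop :=
      tendsto_atTop_mono
        (fun x => le_add_of_nonneg_right (mul_nonneg (hδpos k).le (hRnonneg x))) hcoer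
    obtain ⟨z, hz⟩ := (hE₀cont.add (continuous_const.mul hRcont)).exists_forall_le hco
    exact ⟨z, by rw [hS]; exact hz⟩
  -- each S δ is closed
  have hSclosed : ∀ δ, IsClosed (S δ) := by
    intro δ
    rw [hS]
    have : {x : EuclideanSpace ℝ (Fin n) | ∀ y, E₀ x + δ * R x ≤ E₀ y + δ * R y}
        = ⋂ y, {x : EuclideanSpace ℝ (Fin n) | E₀ x + δ * R x ≤ E₀ y + δ * R y} := by
      ext x; simp [Set.mem_iInter]
    rw [this]
    exact isClosed_iInter fun y =>
      isClosed_le (hE₀cont.add (continuous_const.mul hRcont)) continuous_const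
  haveI : CompactSpace K := isCompact_iff_compactSpace.mp hK
  -- lift the sets S (δn k) to nonempty compact subsets of K
  have hApre : ∀ k, IsCompact ((Subtype.val : K → EuclideanSpace ℝ (Fin n)) ⁻¹' S (δn k)) :=
    fun k => ((hSclosed (δn k)).preimage continuous_subtype_val).isCompact
  set A : ℕ → TopologicalSpace.NonemptyCompacts K := fun k =>
    ⟨⟨(Subtype.val : K → EuclideanSpace ℝ (Fin n)) ⁻¹' S (δn k), hApre k⟩, by
      obtain ⟨z, hz⟩ := hSne k
      exact ⟨⟨z, hSsub k hz⟩, hz⟩⟩ with hAdef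
  -- extract a convergent subsequence in the space of nonempty compacts of K
  obtain ⟨T, -, φ, hφ, hTconv⟩ :=
    isCompact_univ.tendsto_subseq (fun k => Set.mem_univ (A k))
  have hAcar : ∀ k, (A k : Set K) = (Subtype.val : K → EuclideanSpace ℝ (Fin n)) ⁻¹' S (δn k) := fun k => rfl
  have himg : ∀ k, Subtype.val '' ((A k : Set K)) = S (δn k) := by
    intro k
    rw [hAcar, Subtype.image_preimage_coe]
    exact Set.inter_eq_right.mpr (hSsub k)
  set Sstar : Set (EuclideanSpace ℝ (Fin n)) := Subtype.val '' ((T : Set K)) with hSstardef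
  have hδφ0 : Tendsto (fun k => δn (φ k)) atTop (nhds 0) := hδ0.comp hφ.tendsto_atTop
  -- points of Sstar are limits of minimizers, hence belong to SER
  have hsubSER : Sstar ⊆ SER := by
    rintro x ⟨z, hzT, rfl⟩
    -- select minimizers converging to z
    have hne : ∀ k, ((A (φ k) : Set K)).Nonempty := fun k => (A (φ k)).nonempty
    choose w hwmem hwdist using fun k =>
      (A (φ k)).isCompact.exists_infDist_eq_dist (hne k) z
    have hfin : ∀ k, EMetric.hausdorffEdist (T : Set K) ((A (φ k) : Set K)) ≠ ⊤ :=
      fun k => hausdorffEdist_ne_top_of_nonempty_of_bounded T.nonempty (hne k)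
        T.isCompact.isBounded (A (φ k)).isCompact.isBounded
    have hdistle : ∀ k, dist z (w k) ≤ dist (A (φ k)) T := by
      intro k
      rw [← hwdist k]
      calc infDist z ((A (φ k) : Set K))
          ≤ hausdorffDist (T : Set K) ((A (φ k)) : Set K) :=
            infDist_le_hausdorffDist_of_mem hzT (hfin k)
        _ = dist (A (φ k)) T := by
            rw [Metric.NonemptyCompacts.dist_eq, hausdorffDist_comm]
    have hw0 : Tendsto (fun k => dist z (w k)) atTop (nhds 0) := by
      refine squeeze_zero (fun k => dist_nonneg) hdistle ?_
      exact (tendsto_iff_dist_tendsto_zero.mp hTconv)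
    have hwz : Tendsto w atTop (nhds z) := by
      rw [tendsto_iff_dist_tendsto_zero]
      simpa [dist_comm] using hw0
    set xk : ℕ → EuclideanSpace ℝ (Fin n) := fun k => (w k : EuclideanSpace ℝ (Fin n)) with hxkdef
    have hxk : Tendsto xk atTop (nhds (z : EuclideanSpace ℝ (Fin n))) :=
      (continuous_subtype_val.tendsto z).comp hwz
    have hxkS : ∀ k, ∀ y, E₀ (xk k) + δn (φ k) * R (xk k) ≤ E₀ y + δn (φ k) * R y := by
      intro k
      have := hwmem k
      rw [hAcar] at this
      have := this
      rw [hS] at this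
      exact this
    have hxSE : (z : EuclideanSpace ℝ (Fin n)) ∈ SE₀ := by
      rw [hSE₀]
      intro y
      have h1 : Tendsto (fun k => E₀ (xk k)) atTop (nhds (E₀ (z : EuclideanSpace ℝ (Fin n)))) :=
        (hE₀cont.tendsto _).comp hxk
      have h2 : Tendsto (fun k => E₀ y + δn (φ k) * R y) atTop (nhds (E₀ y)) := by
        have h3 := (tendsto_const_nhds (x := E₀ y) (f := atTop (α := ℕ))).add
          (hδφ0.mul_const (R y))
        simpa using h3
      refine le_of_tendsto_of_tendsto' h1 h2 (fun k => ?_)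
      have h4 := hxkS k y
      have h5 : 0 ≤ δn (φ k) * R (xk k) := mul_nonneg (hδpos (φ k)).le (hRnonneg _)
      linarith
    have hRle : ∀ y ∈ SE₀, R (z : EuclideanSpace ℝ (Fin n)) ≤ R y := by
      intro y hy
      rw [hSE₀] at hy
      have key : ∀ k, R (xk k) ≤ R y := by
        intro k
        have h4 := hxkS k y
        have h5 : E₀ y ≤ E₀ (xk k) := hy _
        have h6 : δn (φ k) * R (xk k) ≤ δn (φ k) * R y := by linarith
        exact le_of_mul_le_mul_left h6 (hδpos (φ k))
      exact le_of_tendsto ((hRcont.tendsto _).comp hxk) (Eventually.of_forall key)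
    rw [hSER]
    refine ⟨hxSE, le_antisymm ?_ ?_⟩
    · exact le_csInf ⟨R x₀, x₀, hx₀SE, rfl⟩
        (fun b ⟨y, hy, hby⟩ => hby ▸ hRle y hy)
    · exact csInf_le ⟨0, fun b ⟨y, _, hby⟩ => hby ▸ hRnonneg y⟩ ⟨(z : EuclideanSpace ℝ (Fin n)), hxSE, rfl⟩
  refine ⟨φ, hφ, Sstar, T.nonempty.image _, T.isCompact.image continuous_subtype_val,
    hsubSER, ?_⟩
  have hEq : ∀ k, hausdorffDist (S (δn (φ k))) Sstar = dist (A (φ k)) T := by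
    intro k
    rw [Metric.NonemptyCompacts.dist_eq, ← himg (φ k), hSstardef,
      hausdorffDist_image isometry_subtype_coe]
  have := tendsto_iff_dist_tendsto_zero.mp hTconv
  refine this.congr (fun k => (hEq k).symm)
end

section
/- Let E₀, R : ℝⁿ → [0,∞) be continuous functions with nonempty compact set S_{E₀} of global minimizers of E₀, and let S_{E₀,R} = {x ∈ S_{E₀} : R(x) = inf_{y ∈ S_{E₀}} R(y)}. Let (δ_n) be a sequence of positive real numbers with δ_n → 0, and for each n let x_n be a global minimizer of E₀ + δ_n·R. If the sequence (x_n) converges to a point x*, then x* ∈ S_{E₀,R}; that is, x* is a global minimizer of E₀ and R(x*) = inf_{y ∈ S_{E₀}} R(y). -/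
open Filter

/-- If `δ_n → 0`, `x_n` globally minimizes `E₀ + δ_n R`, and `x_n → x*`, then `x*`
globally minimizes `E₀` and `R x* = inf_{S_{E₀}} R`. -/
theorem stmt_2 {n : ℕ} (E₀ R : EuclideanSpace ℝ (Fin n) → ℝ)
    (hE₀cont : Continuous E₀) (hRcont : Continuous R)
    (hE₀nonneg : ∀ x, 0 ≤ E₀ x) (hRnonneg : ∀ x, 0 ≤ R x)
    (SE₀ : Set (EuclideanSpace ℝ (Fin n)))
    (hSE₀ : SE₀ = {x | ∀ y, E₀ x ≤ E₀ y})
    (hSE₀ne : SE₀.Nonempty) (hSE₀cpt : IsCompact SE₀)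
    (δn : ℕ → ℝ) (hδpos : ∀ k, 0 < δn k) (hδ0 : Tendsto δn atTop (nhds 0))
    (x : ℕ → EuclideanSpace ℝ (Fin n))
    (hmin : ∀ k, ∀ y, E₀ (x k) + δn k * R (x k) ≤ E₀ y + δn k * R y)
    (xstar : EuclideanSpace ℝ (Fin n))
    (hlim : Tendsto x atTop (nhds xstar)) :
    xstar ∈ SE₀ ∧ R xstar = sInf (R '' SE₀) := by
  obtain ⟨x₀, hx₀⟩ := hSE₀ne
  rw [hSE₀] at hx₀
  have hE₀lim : Tendsto (fun k => E₀ (x k)) atTop (nhds (E₀ xstar)) :=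
    (hE₀cont.tendsto xstar).comp hlim
  have hRlim : Tendsto (fun k => R (x k)) atTop (nhds (R xstar)) :=
    (hRcont.tendsto xstar).comp hlim
  -- x* minimizes E₀
  have hstar_min : ∀ y, E₀ xstar ≤ E₀ y := by
    intro y
    have hk : ∀ k, E₀ (x k) ≤ E₀ x₀ + δn k * R x₀ := by
      intro k
      calc E₀ (x k) ≤ E₀ (x k) + δn k * R (x k) := by
            nlinarith [hRnonneg (x k), (hδpos k).le]
        _ ≤ E₀ x₀ + δn k * R x₀ := hmin k x₀
    have hrhs : Tendsto (fun k => E₀ x₀ + δn k * R x₀) atTop (nhds (E₀ x₀)) := by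
      have := (tendsto_const_nhds (x := E₀ x₀)).add ((hδ0.mul_const (R x₀)))
      simpa using this
    have : E₀ xstar ≤ E₀ x₀ :=
      le_of_tendsto_of_tendsto' hE₀lim hrhs hk
    exact this.trans (hx₀ y)
  have hstar_mem : xstar ∈ SE₀ := by rw [hSE₀]; exact hstar_min
  refine ⟨hstar_mem, ?_⟩
  -- R x* ≤ R y for all y ∈ SE₀
  have hRle : ∀ y ∈ SE₀, R xstar ≤ R y := by
    intro y hy
    rw [hSE₀] at hy
    have hk : ∀ k, R (x k) ≤ R y := by
      intro k
      have h1 := hmin k y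
      have h2 := hy (x k)
      have := hδpos k
      nlinarith
    exact le_of_tendsto_of_tendsto' hRlim tendsto_const_nhds hk
  apply le_antisymm
  · apply le_csInf
    · exact ⟨R xstar, xstar, hstar_mem, rfl⟩
    · intro r hr
      obtain ⟨y, hy, rfl⟩ := hr
      exact hRle y hy
  · apply csInf_le
    · exact ⟨0, fun r hr => by obtain ⟨y, _, rfl⟩ := hr; exact hRnonneg y⟩
    · exact ⟨xstar, hstar_mem, rfl⟩
end

section
/- Let E₀, R : ℝⁿ → [0,∞) be continuous with E₀ coercive, let S_{E₀} be the set of global minimizers of E₀ and μ = inf_{y ∈ S_{E₀}} R(y). If (δ_n) is a sequence of positive reals with δ_n → 0 and x_n is a global minimizer of E₀ + δ_n·R for each n, then the sequence (x_n) is bounded, and every subsequential limit x* of (x_n) satisfies x* ∈ S_{E₀} and R(x*) = μ. -/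
open Filter

/-- If `E₀` is coercive, `δ_n → 0`, and `x_n` globally minimizes `E₀ + δ_n R`, then
`(x_n)` is bounded and every subsequential limit lies in `S_{E₀}` and minimizes `R`
over `S_{E₀}`. -/
theorem stmt_12 {n : ℕ} (E₀ R : EuclideanSpace ℝ (Fin n) → ℝ)
    (hE₀cont : Continuous E₀) (hRcont : Continuous R)
    (hE₀nonneg : ∀ x, 0 ≤ E₀ x) (hRnonneg : ∀ x, 0 ≤ R x)
    (hcoer : Tendsto E₀ (cocompact (EuclideanSpace ℝ (Fin n))) atTop)
    (SE₀ : Set (EuclideanSpace ℝ (Fin n)))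
    (hSE₀ : SE₀ = {x | ∀ y, E₀ x ≤ E₀ y})
    (μ : ℝ) (hμ : μ = sInf (R '' SE₀))
    (δn : ℕ → ℝ) (hδpos : ∀ k, 0 < δn k) (hδ0 : Tendsto δn atTop (nhds 0))
    (x : ℕ → EuclideanSpace ℝ (Fin n))
    (hmin : ∀ k, ∀ y, E₀ (x k) + δn k * R (x k) ≤ E₀ y + δn k * R y) :
    (∃ C : ℝ, ∀ k, ‖x k‖ ≤ C) ∧
    (∀ (φ : ℕ → ℕ), StrictMono φ → ∀ xstar : EuclideanSpace ℝ (Fin n),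
      Tendsto (x ∘ φ) atTop (nhds xstar) → xstar ∈ SE₀ ∧ R xstar = μ) := by
  -- E₀ attains its minimum
  obtain ⟨x₀, hx₀⟩ : ∃ x, ∀ y, E₀ x ≤ E₀ y := hE₀cont.exists_forall_le hcoer
  have hx₀S : x₀ ∈ SE₀ := by rw [hSE₀]; exact hx₀
  have hSne : SE₀.Nonempty := ⟨x₀, hx₀S⟩
  -- SE₀ is compact
  have hScomp : IsCompact SE₀ := by
    obtain ⟨t, htc, htsub⟩ := mem_cocompact.mp
      (hcoer.eventually (eventually_ge_atTop (E₀ x₀ + 1)))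
    have hsub : SE₀ ⊆ t := by
      intro z hz
      by_contra hzt
      have := htsub hzt
      simp only [Set.mem_setOf_eq] at this
      rw [hSE₀] at hz
      have := hz x₀
      linarith
    have hclosed : IsClosed SE₀ := by
      rw [hSE₀]
      have : {x | ∀ y, E₀ x ≤ E₀ y} = ⋂ y, {x | E₀ x ≤ E₀ y} := by ext; simp
      rw [this]
      exact isClosed_iInter fun y => isClosed_le hE₀cont continuous_const
    exact htc.of_isClosed_subset hclosed hsub
  -- R attains min μ on SE₀
  obtain ⟨z, hzS, hzmin⟩ := hScomp.exists_isMinOn hSne hRcont.continuousOn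
  have hbdd : BddBelow (R '' SE₀) := ⟨0, fun r ⟨w, _, hw⟩ => hw ▸ hRnonneg w⟩
  have hμz : R z = μ := by
    rw [hμ]
    apply le_antisymm
    · exact le_csInf (hSne.image R) (fun r ⟨w, hwS, hw⟩ => hw ▸ hzmin hwS)
    · exact csInf_le hbdd ⟨z, hzS, rfl⟩
  have hzE : ∀ y, E₀ z ≤ E₀ y := by rw [hSE₀] at hzS; exact hzS
  -- key: R (x k) ≤ μ for all k
  have hRle : ∀ k, R (x k) ≤ μ := by
    intro k
    have h1 := hmin k z
    have h2 := hzE (x k)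
    have h3 := (hδpos k).le
    nlinarith [hδpos k]
  constructor
  · -- boundedness: E₀ (x k) ≤ E₀ z + D * μ where D bounds δn
    obtain ⟨D, hD⟩ := hδ0.bddAbove_range
    have hμ0 : 0 ≤ μ := hμz ▸ hRnonneg z
    obtain ⟨t, htc, htsub⟩ := mem_cocompact.mp
      (hcoer.eventually (eventually_ge_atTop (E₀ z + D * μ + 1)))
    obtain ⟨C, hC⟩ := htc.isBounded.subset_closedBall 0
    refine ⟨C, fun k => ?_⟩
    have hxt : x k ∈ t := by
      by_contra hxt
      have h1 := htsub hxt
      simp only [Set.mem_setOf_eq] at h1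
      have h2 := hmin k z
      have h3 : δn k ≤ D := hD ⟨k, rfl⟩
      have h4 := mul_nonneg (hδpos k).le (hRnonneg (x k))
      have h5 : δn k * R z ≤ D * μ := by rw [hμz]; exact mul_le_mul_of_nonneg_right h3 hμ0
      linarith [hzE (x k)]
    simpa [mem_closedBall_zero_iff] using hC hxt
  · intro φ hφ xstar hlim
    have hδφ : Tendsto (δn ∘ φ) atTop (nhds 0) := hδ0.comp hφ.tendsto_atTop
    have hxS : xstar ∈ SE₀ := by
      rw [hSE₀]
      intro y
      have hE : Tendsto (fun k => E₀ (x (φ k))) atTop (nhds (E₀ xstar)) :=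
        (hE₀cont.tendsto xstar).comp hlim
      have hG : Tendsto (fun k => E₀ y + δn (φ k) * R y) atTop (nhds (E₀ y)) := by
        have : Tendsto (fun k => δn (φ k) * R y) atTop (nhds 0) := by
          simpa using hδφ.mul_const (R y)
        simpa using tendsto_const_nhds.add this
      refine le_of_tendsto_of_tendsto' hE hG (fun k => ?_)
      have h1 := hmin (φ k) y
      have h2 := mul_nonneg (hδpos (φ k)).le (hRnonneg (x (φ k)))
      linarith
    refine ⟨hxS, le_antisymm ?_ ?_⟩
    · have hR : Tendsto (fun k => R (x (φ k))) atTop (nhds (R xstar)) :=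
        (hRcont.tendsto xstar).comp hlim
      exact le_of_tendsto' hR (fun k => hRle (φ k))
    · rw [hμ]; exact csInf_le hbdd ⟨xstar, hxS, rfl⟩
end
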